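/- Let (X^n, Y^n) be such that X_1,…,X_n are i.i.d. Bernoulli(p) with p ∈ [1/2, 1), Y_k = X_k ⊕ V_k with V_1,…,V_n i.i.d. Bernoulli(α) independent of X^n, α ∈ [0, 1/2), and ᾱ > p. Then for every n ≥ 1 and every ε ∈ [p, ᾱ], h_n^i(ε) = 1 − ζ(ε) q, where q = αp̄ + ᾱp and ζ(ε) := (ᾱp̄ + ᾱp − ε)/(ᾱp − αp̄); in particular h_n^i(ε) does not depend on n and equals the scalar value h(P_{XY}, ε). -/
import Mathlib


noncomputable section

/-- A row-stochastic matrix (channel) from an `n`-ary input to a `k`-ary output. -/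
def IsStoch {n k : ℕ} (F : Fin n → Fin k → ℝ) : Prop :=
  (∀ y z, 0 ≤ F y z) ∧ ∀ y, ∑ z, F y z = 1

/-- A joint pmf on `{1,…,m} × {1,…,n}`. -/
def IsPmf {m n : ℕ} (P : Fin m → Fin n → ℝ) : Prop :=
  (∀ x y, 0 ≤ P x y) ∧ ∑ x, ∑ y, P x y = 1

/-- `P_c(X) = max_x P_X(x)`. -/
def pcX {m n : ℕ} (P : Fin m → Fin n → ℝ) : ℝ := ⨆ x, ∑ y, P x y

/-- `P_c(Y) = max_y P_Y(y)`. -/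
def pcY {m n : ℕ} (P : Fin m → Fin n → ℝ) : ℝ := ⨆ y, ∑ x, P x y

/-- `P_c(X|Y) = Σ_y max_x P_{XY}(x,y)`. -/
def pcXgY {m n : ℕ} (P : Fin m → Fin n → ℝ) : ℝ := ∑ y, ⨆ x, P x y

/-- `𝒫(F) = P_c(X|Z) = Σ_z max_x Σ_y P_{XY}(x,y) F(y,z)` for a filter `F = P_{Z|Y}`
under the Markov chain `X – Y – Z`. -/
def privP {m n k : ℕ} (P : Fin m → Fin n → ℝ) (F : Fin n → Fin k → ℝ) : ℝ :=
  ∑ z, ⨆ x, ∑ y, P x y * F y z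

/-- `𝒰(F) = P_c(Y|Z) = Σ_z max_y P_Y(y) F(y,z)` for a filter `F = P_{Z|Y}`. -/
def privU {m n k : ℕ} (P : Fin m → Fin n → ℝ) (F : Fin n → Fin k → ℝ) : ℝ :=
  ∑ z, ⨆ y, (∑ x, P x y) * F y z

/-- The set `ℱ` of privacy filters: `n × (n+1)` row-stochastic matrices. -/
def filtSet (n : ℕ) : Set (Fin n → Fin (n + 1) → ℝ) := {F | IsStoch F}

/-- The privacy-aware guessing function
`h(P_{XY}, ε) = max { 𝒰(F) : F ∈ ℱ, 𝒫(F) ≤ ε }`. -/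
def hFun {m n : ℕ} (P : Fin m → Fin n → ℝ) (ε : ℝ) : ℝ :=
  sSup {u | ∃ F ∈ filtSet n, privP P F ≤ ε ∧ privU P F = u}

open scoped Classical

/-- The scalar joint pmf of `(X, Y)` where `X ∼ Bernoulli(p)` (i.e. `P(X=1) = p`) and
`Y = X ⊕ V` with `V ∼ Bernoulli(α)` independent of `X` (a BSC(α)). -/
def pXY (p α : ℝ) : Fin 2 → Fin 2 → ℝ := fun x y =>
  (if x = 1 then p else 1 - p) * (if y = x then 1 - α else α)

/-- The i.i.d. joint pmf of `(X^n, Y^n)`: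
`P_{X^nY^n}(x,y) = Π_k P_{XY}(x_k, y_k)`. -/
def pXYn (n : ℕ) (p α : ℝ) : (Fin n → Fin 2) → (Fin n → Fin 2) → ℝ := fun x y =>
  ∏ k, pXY p α (x k) (y k)

/-- A channel on binary `n`-vectors (row-stochastic, not necessarily memoryless). -/
def IsChan (n : ℕ) (Q : (Fin n → Fin 2) → (Fin n → Fin 2) → ℝ) : Prop :=
  (∀ y z, 0 ≤ Q y z) ∧ ∀ y, ∑ z, Q y z = 1

/-- `P_c(X^n | Z^n)` when `Z^n` is generated from `Y^n` via the channel `Q`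
(Markov chain `X^n – Y^n – Z^n`). -/
def pcXZn (n : ℕ) (p α : ℝ) (Q : (Fin n → Fin 2) → (Fin n → Fin 2) → ℝ) : ℝ :=
  ∑ z, ⨆ x, ∑ y, pXYn n p α x y * Q y z

/-- `P_c(Y^n | Z^n)` when `Z^n` is generated from `Y^n` via the channel `Q`. -/
def pcYZn (n : ℕ) (p α : ℝ) (Q : (Fin n → Fin 2) → (Fin n → Fin 2) → ℝ) : ℝ :=
  ∑ z, ⨆ y, (∑ x, pXYn n p α x y) * Q y z

/-- `h̲_n(ε) = max P_c(Y^n|Z^n)^{1/n}` over all channels `P_{Z^n|Y^n}` with binary output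
vectors forming the Markov chain `X^n – Y^n – Z^n` and with `P_c(X^n|Z^n) ≤ ε^n`. -/
def hLow (n : ℕ) (p α : ℝ) (ε : ℝ) : ℝ :=
  sSup {u : ℝ | ∃ Q, IsChan n Q ∧ pcXZn n p α Q ≤ ε ^ n ∧
    u = pcYZn n p α Q ^ ((n : ℝ)⁻¹)}

/-- The memoryless channel on binary `n`-vectors obtained by applying a single
binary-input binary-output channel `W` coordinatewise. -/
def memoryless (n : ℕ) (W : Fin 2 → Fin 2 → ℝ) :
    (Fin n → Fin 2) → (Fin n → Fin 2) → ℝ := fun y z => ∏ k, W (y k) (z k)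

/-- `h_n^i(ε) = max P_c(Y^n|Z^n)^{1/n}` over all memoryless binary privacy filters
(a single BIBO channel applied coordinatewise) with `P_c(X^n|Z^n) ≤ ε^n`. -/
def hIid (n : ℕ) (p α : ℝ) (ε : ℝ) : ℝ :=
  sSup {u : ℝ | ∃ W : Fin 2 → Fin 2 → ℝ, IsStoch W ∧
    pcXZn n p α (memoryless n W) ≤ ε ^ n ∧
    u = pcYZn n p α (memoryless n W) ^ ((n : ℝ)⁻¹)}

/-! ### Auxiliary lemmas -/

lemma iSup_fin2 (f : Fin 2 → ℝ) : (⨆ x, f x) = max (f 0) (f 1) := by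
  apply le_antisymm
  · exact ciSup_le fun x => by fin_cases x <;> simp [le_max_left, le_max_right]
  · exact max_le (le_ciSup (Set.finite_range f).bddAbove _)
      (le_ciSup (Set.finite_range f).bddAbove _)

lemma exists_iSup_eq {ι : Type*} [Fintype ι] [Nonempty ι] (f : ι → ℝ) :
    ∃ i, (⨆ j, f j) = f i := by
  obtain ⟨i, hi⟩ := Finite.exists_max f
  exact ⟨i, le_antisymm (ciSup_le hi) (le_ciSup (Set.finite_range f).bddAbove i)⟩

lemma iSup_prod_eq {n : ℕ} (g : Fin n → Fin 2 → ℝ) (hg : ∀ k j, 0 ≤ g k j) :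
    (⨆ x : Fin n → Fin 2, ∏ k, g k (x k)) = ∏ k, ⨆ j, g k j := by
  apply le_antisymm
  · exact ciSup_le fun x => Finset.prod_le_prod (fun k _ => hg k (x k))
      (fun k _ => le_ciSup (Set.finite_range _).bddAbove (x k))
  · choose x hx using fun k => exists_iSup_eq (g k)
    calc ∏ k, ⨆ j, g k j = ∏ k, g k (x k) := Finset.prod_congr rfl fun k _ => hx k
    _ ≤ ⨆ x : Fin n → Fin 2, ∏ k, g k (x k) :=
      le_ciSup (f := fun x : Fin n → Fin 2 => ∏ k, g k (x k))
        (Set.finite_range _).bddAbove x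

lemma pXY_00 (p α : ℝ) : pXY p α 0 0 = (1-p)*(1-α) := by simp [pXY]
lemma pXY_01 (p α : ℝ) : pXY p α 0 1 = (1-p)*α := by simp [pXY]
lemma pXY_10 (p α : ℝ) : pXY p α 1 0 = p*α := by simp [pXY]
lemma pXY_11 (p α : ℝ) : pXY p α 1 1 = p*(1-α) := by simp [pXY]

lemma pXY_nonneg {p α : ℝ} (hp0 : 0 ≤ p) (hp1 : p ≤ 1) (ha0 : 0 ≤ α) (ha1 : α ≤ 1)
    (x y : Fin 2) : 0 ≤ pXY p α x y := by
  unfold pXY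
  apply mul_nonneg <;> split <;> linarith

/-- Column (max) form of `privU` for the BSC joint pmf. -/
lemma privU_eq {k : ℕ} (p α : ℝ) (F : Fin 2 → Fin k → ℝ) :
    privU (pXY p α) F =
      ∑ z, max (((1-p)*(1-α) + p*α) * F 0 z) (((1-p)*α + p*(1-α)) * F 1 z) := by
  unfold privU
  refine Finset.sum_congr rfl fun z _ => ?_
  rw [iSup_fin2 (fun y => (∑ x, pXY p α x y) * F y z)]
  simp only [Fin.sum_univ_two, pXY_00, pXY_01, pXY_10, pXY_11]

/-- Column (max) form of `privP` for the BSC joint pmf. -/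
lemma privP_eq {k : ℕ} (p α : ℝ) (F : Fin 2 → Fin k → ℝ) :
    privP (pXY p α) F =
      ∑ z, max ((1-p)*(1-α) * F 0 z + (1-p)*α * F 1 z)
               (p*α * F 0 z + p*(1-α) * F 1 z) := by
  unfold privP
  refine Finset.sum_congr rfl fun z _ => ?_
  rw [iSup_fin2 (fun x => ∑ y, pXY p α x y * F y z)]
  simp only [Fin.sum_univ_two, pXY_00, pXY_01, pXY_10, pXY_11]

lemma privP_nonneg {k : ℕ} {p α : ℝ} (hp0 : 0 ≤ p) (hp1 : p ≤ 1) (ha0 : 0 ≤ α) (ha1 : α ≤ 1)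
    (F : Fin 2 → Fin k → ℝ) (hF : ∀ y z, 0 ≤ F y z) : 0 ≤ privP (pXY p α) F := by
  rw [privP_eq]
  refine Finset.sum_nonneg fun z _ => le_max_of_le_left ?_
  have h1 := hF 0 z; have h2 := hF 1 z
  nlinarith [mul_nonneg (mul_nonneg (by linarith : (0:ℝ) ≤ 1-p) (by linarith : (0:ℝ) ≤ 1-α)) h1,
    mul_nonneg (mul_nonneg (by linarith : (0:ℝ) ≤ 1-p) ha0) h2]

lemma privU_nonneg {k : ℕ} {p α : ℝ} (hp0 : 0 ≤ p) (hp1 : p ≤ 1) (ha0 : 0 ≤ α) (ha1 : α ≤ 1)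
    (F : Fin 2 → Fin k → ℝ) (hF : ∀ y z, 0 ≤ F y z) : 0 ≤ privU (pXY p α) F := by
  rw [privU_eq]
  refine Finset.sum_nonneg fun z _ => le_max_of_le_left ?_
  have h1 := hF 0 z
  nlinarith [mul_nonneg (add_nonneg (mul_nonneg (by linarith : (0:ℝ) ≤ 1-p) (by linarith : (0:ℝ) ≤ 1-α)) (mul_nonneg hp0 ha0)) h1]

/-- The key per-column inequality for the converse. -/
lemma col_ineq (p α a b : ℝ) (hp1 : 1/2 ≤ p) (hp2 : p < 1) (ha1 : 0 ≤ α) (ha2 : α < 1/2)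
    (ha : 0 ≤ a) (hb : 0 ≤ b) :
    (p - α) * max (((1-p)*(1-α) + p*α) * a) (((1-p)*α + p*(1-α)) * b) ≤
      ((1-p)*α + p*(1-α)) * max ((1-p)*(1-α) * a + (1-p)*α * b) (p*α * a + p*(1-α) * b)
      + ((p-α)*((1-p)*(1-α)+p*α) - ((1-p)*α+p*(1-α))*((1-p)*(1-α))) * a
      + ((p-α)*((1-p)*α+p*(1-α)) - ((1-p)*α+p*(1-α))*(p*(1-α))) * b := by
  have hq : (0:ℝ) ≤ (1-p)*α + p*(1-α) := by nlinarith
  rcases le_total (((1-p)*(1-α) + p*α) * a) (((1-p)*α + p*(1-α)) * b) with h | h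
  · rw [max_eq_right h]
    have h1 : ((1-p)*α+p*(1-α)) * (p*α * a + p*(1-α) * b) ≤
        ((1-p)*α+p*(1-α)) * max ((1-p)*(1-α) * a + (1-p)*α * b) (p*α * a + p*(1-α) * b) :=
      mul_le_mul_of_nonneg_left (le_max_right _ _) hq
    nlinarith [mul_nonneg (mul_nonneg (mul_nonneg ha1 (by linarith : (0:ℝ) ≤ 1-α))
      (by linarith : (0:ℝ) ≤ 2*p-1)) ha]
  · rw [max_eq_left h]
    have h1 : ((1-p)*α+p*(1-α)) * ((1-p)*(1-α) * a + (1-p)*α * b) ≤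
        ((1-p)*α+p*(1-α)) * max ((1-p)*(1-α) * a + (1-p)*α * b) (p*α * a + p*(1-α) * b) :=
      mul_le_mul_of_nonneg_left (le_max_left _ _) hq
    nlinarith [h1]

/-- Converse: any stochastic filter with `privP ≤ ε` has `privU` at most the optimum. -/
lemma privU_le {k : ℕ} {p α ε : ℝ} (hp1 : 1/2 ≤ p) (hp2 : p < 1) (ha1 : 0 ≤ α)
    (ha2 : α < 1/2) (F : Fin 2 → Fin k → ℝ) (hF : IsStoch F)
    (hP : privP (pXY p α) F ≤ ε) :
    privU (pXY p α) F ≤ 1 - (1-α-ε)/(p-α) * ((1-p)*α + p*(1-α)) := by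
  obtain ⟨hFnn, hFsum⟩ := hF
  have hpa : (0:ℝ) < p - α := by linarith
  have hq : (0:ℝ) ≤ (1-p)*α + p*(1-α) := by nlinarith
  have hsum : (p-α) * privU (pXY p α) F ≤
      ((1-p)*α + p*(1-α)) * privP (pXY p α) F
      + (((p-α)*((1-p)*(1-α)+p*α) - ((1-p)*α+p*(1-α))*((1-p)*(1-α)))
        + ((p-α)*((1-p)*α+p*(1-α)) - ((1-p)*α+p*(1-α))*(p*(1-α)))) := by
    rw [privU_eq, privP_eq, Finset.mul_sum, Finset.mul_sum]
    calc (∑ z, (p-α) * max (((1-p)*(1-α) + p*α) * F 0 z) (((1-p)*α + p*(1-α)) * F 1 z))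
        ≤ ∑ z, (((1-p)*α + p*(1-α)) *
            max ((1-p)*(1-α) * F 0 z + (1-p)*α * F 1 z) (p*α * F 0 z + p*(1-α) * F 1 z)
          + ((p-α)*((1-p)*(1-α)+p*α) - ((1-p)*α+p*(1-α))*((1-p)*(1-α))) * F 0 z
          + ((p-α)*((1-p)*α+p*(1-α)) - ((1-p)*α+p*(1-α))*(p*(1-α))) * F 1 z) :=
          Finset.sum_le_sum fun z _ =>
            col_ineq p α (F 0 z) (F 1 z) hp1 hp2 ha1 ha2 (hFnn 0 z) (hFnn 1 z)
      _ = (∑ z, ((1-p)*α + p*(1-α)) *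
            max ((1-p)*(1-α) * F 0 z + (1-p)*α * F 1 z) (p*α * F 0 z + p*(1-α) * F 1 z))
          + ((p-α)*((1-p)*(1-α)+p*α) - ((1-p)*α+p*(1-α))*((1-p)*(1-α))) * (∑ z, F 0 z)
          + ((p-α)*((1-p)*α+p*(1-α)) - ((1-p)*α+p*(1-α))*(p*(1-α))) * (∑ z, F 1 z) := by
          rw [Finset.sum_add_distrib, Finset.sum_add_distrib, ← Finset.mul_sum,
            ← Finset.mul_sum, ← Finset.mul_sum]
      _ = _ := by rw [hFsum 0, hFsum 1]; ring
  have h2 : privU (pXY p α) F * (p-α) ≤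
      (1 - (1-α-ε)/(p-α) * ((1-p)*α + p*(1-α))) * (p-α) := by
    have hPq : ((1-p)*α + p*(1-α)) * privP (pXY p α) F ≤ ((1-p)*α + p*(1-α)) * ε :=
      mul_le_mul_of_nonneg_left hP hq
    have hexp : (1 - (1-α-ε)/(p-α) * ((1-p)*α + p*(1-α))) * (p-α)
        = ((1-p)*α + p*(1-α)) * ε
        + (((p-α)*((1-p)*(1-α)+p*α) - ((1-p)*α+p*(1-α))*((1-p)*(1-α)))
          + ((p-α)*((1-p)*α+p*(1-α)) - ((1-p)*α+p*(1-α))*(p*(1-α)))) := by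
      field_simp
      ring
    rw [hexp]
    linarith [hsum]
  exact le_of_mul_le_mul_right (by linarith [h2]) hpa
/-- The optimal scalar filter (a Z-channel). -/
def Wopt (p α ε : ℝ) : Fin 2 → Fin 2 → ℝ := fun y z =>
  if y = 0 then (if z = 0 then 1 else 0)
  else (if z = 0 then 1 - (ε - (1-p))/(p-α) else (ε - (1-p))/(p-α))

/-- The optimal scalar filter embedded with three outputs. -/
def Fopt (p α ε : ℝ) : Fin 2 → Fin 3 → ℝ := fun y z =>
  if y = 0 then (if z = 0 then 1 else 0)
  else (if z = 0 then 1 - (ε - (1-p))/(p-α) else if z = 1 then (ε - (1-p))/(p-α) else 0)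

section opt

variable {p α ε : ℝ} (hp1 : 1/2 ≤ p) (hp2 : p < 1) (ha1 : 0 ≤ α) (ha2 : α < 1/2)
  (hap : 1 - α > p) (he1 : p ≤ ε) (he2 : ε ≤ 1 - α)

include hp1 hp2 ha1 ha2 hap he1 he2

lemma delta_mem : 0 ≤ (ε - (1-p))/(p-α) ∧ (ε - (1-p))/(p-α) ≤ 1 := by
  have hpa : (0:ℝ) < p - α := by linarith
  constructor
  · apply div_nonneg _ hpa.le; linarith
  · rw [div_le_one hpa]; linarith

lemma isStoch_Wopt : IsStoch (Wopt p α ε) := by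
  obtain ⟨hd0, hd1⟩ := delta_mem hp1 hp2 ha1 ha2 hap he1 he2
  constructor
  · intro y z
    fin_cases y <;> fin_cases z <;> simp [Wopt] <;> linarith
  · intro y
    fin_cases y <;> simp [Wopt, Fin.sum_univ_two]

lemma isStoch_Fopt : IsStoch (Fopt p α ε) := by
  obtain ⟨hd0, hd1⟩ := delta_mem hp1 hp2 ha1 ha2 hap he1 he2
  constructor
  · intro y z
    fin_cases y <;> fin_cases z <;> simp [Fopt] <;> linarith
  · intro y
    fin_cases y <;> simp [Fopt, Fin.sum_univ_three]

lemma privP_Wopt : privP (pXY p α) (Wopt p α ε) = ε := by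
  have hpa : (0:ℝ) < p - α := by linarith
  have hδ : (ε - (1-p))/(p-α) * (p-α) = ε - (1-p) := div_mul_cancel₀ _ hpa.ne'
  obtain ⟨hd0, hd1⟩ := delta_mem hp1 hp2 ha1 ha2 hap he1 he2
  rw [privP_eq, Fin.sum_univ_two]
  have e00 : Wopt p α ε 0 0 = 1 := by simp [Wopt]
  have e01 : Wopt p α ε 0 1 = 0 := by simp [Wopt]
  have e10 : Wopt p α ε 1 0 = 1 - (ε - (1-p))/(p-α) := by simp [Wopt]
  have e11 : Wopt p α ε 1 1 = (ε - (1-p))/(p-α) := by simp [Wopt]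
  rw [e00, e01, e10, e11]
  have m1 : p*α * 1 + p*(1-α) * (1 - (ε - (1-p))/(p-α)) ≤
      (1-p)*(1-α) * 1 + (1-p)*α * (1 - (ε - (1-p))/(p-α)) := by
    have e : ((1-p)*(1-α) * 1 + (1-p)*α * (1 - (ε - (1-p))/(p-α)))
        - (p*α * 1 + p*(1-α) * (1 - (ε - (1-p))/(p-α))) = ε - p := by linear_combination hδ
    linarith
  have m2 : (1-p)*(1-α) * 0 + (1-p)*α * ((ε - (1-p))/(p-α)) ≤
      p*α * 0 + p*(1-α) * ((ε - (1-p))/(p-α)) := by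
    have e : (p*α * 0 + p*(1-α) * ((ε - (1-p))/(p-α)))
        - ((1-p)*(1-α) * 0 + (1-p)*α * ((ε - (1-p))/(p-α))) = ε - (1-p) := by
      linear_combination hδ
    linarith
  rw [max_eq_left m1, max_eq_right m2]
  have hne' : p - α ≠ 0 := hpa.ne'
  field_simp [hne']
  ring

lemma privU_Wopt : privU (pXY p α) (Wopt p α ε) =
    1 - (1-α-ε)/(p-α) * ((1-p)*α + p*(1-α)) := by
  have hpa : (0:ℝ) < p - α := by linarith
  have hδ : (ε - (1-p))/(p-α) * (p-α) = ε - (1-p) := div_mul_cancel₀ _ hpa.ne'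
  obtain ⟨hd0, hd1⟩ := delta_mem hp1 hp2 ha1 ha2 hap he1 he2
  rw [privU_eq, Fin.sum_univ_two]
  have e00 : Wopt p α ε 0 0 = 1 := by simp [Wopt]
  have e01 : Wopt p α ε 0 1 = 0 := by simp [Wopt]
  have e10 : Wopt p α ε 1 0 = 1 - (ε - (1-p))/(p-α) := by simp [Wopt]
  have e11 : Wopt p α ε 1 1 = (ε - (1-p))/(p-α) := by simp [Wopt]
  rw [e00, e01, e10, e11]
  have hN : (0:ℝ) ≤ ((1-p)*(1-α)+p*α - ((1-p)*α+p*(1-α)))*(p-α)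
      + ((1-p)*α+p*(1-α))*(ε-1+p) := by
    nlinarith [mul_nonneg (mul_nonneg ha1 (by linarith : (0:ℝ) ≤ 1-α))
        (by linarith : (0:ℝ) ≤ 2*p-1),
      mul_nonneg (by nlinarith : (0:ℝ) ≤ (1-p)*α+p*(1-α)) (by linarith : (0:ℝ) ≤ ε - p)]
  have m1 : ((1-p)*α + p*(1-α)) * (1 - (ε - (1-p))/(p-α)) ≤
      ((1-p)*(1-α) + p*α) * 1 := by
    have e : ((1-p)*(1-α) + p*α) * 1 - ((1-p)*α + p*(1-α)) * (1 - (ε - (1-p))/(p-α))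
        = (((1-p)*(1-α)+p*α - ((1-p)*α+p*(1-α)))*(p-α)
            + ((1-p)*α+p*(1-α))*(ε-1+p)) / (p-α) := by
      field_simp
      ring
    have := div_nonneg hN hpa.le
    linarith [e ▸ this]
  have m2 : ((1-p)*(1-α) + p*α) * 0 ≤ ((1-p)*α + p*(1-α)) * ((ε - (1-p))/(p-α)) := by
    have : (0:ℝ) ≤ ((1-p)*α+p*(1-α)) := by nlinarith
    nlinarith [mul_nonneg this hd0]
  rw [max_eq_left m1, max_eq_right m2]
  have hne' : p - α ≠ 0 := hpa.ne'
  field_simp [hne']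
  ring

lemma privP_Fopt : privP (pXY p α) (Fopt p α ε) = ε := by
  have hpa : (0:ℝ) < p - α := by linarith
  have hδ : (ε - (1-p))/(p-α) * (p-α) = ε - (1-p) := div_mul_cancel₀ _ hpa.ne'
  obtain ⟨hd0, hd1⟩ := delta_mem hp1 hp2 ha1 ha2 hap he1 he2
  rw [privP_eq, Fin.sum_univ_three]
  have e00 : Fopt p α ε 0 0 = 1 := by simp [Fopt]
  have e01 : Fopt p α ε 0 1 = 0 := by simp [Fopt]
  have e02 : Fopt p α ε 0 2 = 0 := by simp [Fopt]
  have e10 : Fopt p α ε 1 0 = 1 - (ε - (1-p))/(p-α) := by simp [Fopt]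
  have e11 : Fopt p α ε 1 1 = (ε - (1-p))/(p-α) := by simp [Fopt]
  have e12 : Fopt p α ε 1 2 = 0 := by simp [Fopt]
  rw [e00, e01, e02, e10, e11, e12]
  have m1 : p*α * 1 + p*(1-α) * (1 - (ε - (1-p))/(p-α)) ≤
      (1-p)*(1-α) * 1 + (1-p)*α * (1 - (ε - (1-p))/(p-α)) := by
    have e : ((1-p)*(1-α) * 1 + (1-p)*α * (1 - (ε - (1-p))/(p-α)))
        - (p*α * 1 + p*(1-α) * (1 - (ε - (1-p))/(p-α))) = ε - p := by linear_combination hδ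
    linarith
  have m2 : (1-p)*(1-α) * 0 + (1-p)*α * ((ε - (1-p))/(p-α)) ≤
      p*α * 0 + p*(1-α) * ((ε - (1-p))/(p-α)) := by
    have e : (p*α * 0 + p*(1-α) * ((ε - (1-p))/(p-α)))
        - ((1-p)*(1-α) * 0 + (1-p)*α * ((ε - (1-p))/(p-α))) = ε - (1-p) := by
      linear_combination hδ
    linarith
  have m3 : max ((1-p)*(1-α) * (0:ℝ) + (1-p)*α * 0) (p*α * 0 + p*(1-α) * 0) = 0 := by
    norm_num
  rw [max_eq_left m1, max_eq_right m2, m3]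
  have hne' : p - α ≠ 0 := hpa.ne'
  field_simp [hne']
  ring

lemma privU_Fopt : privU (pXY p α) (Fopt p α ε) =
    1 - (1-α-ε)/(p-α) * ((1-p)*α + p*(1-α)) := by
  have hpa : (0:ℝ) < p - α := by linarith
  have hδ : (ε - (1-p))/(p-α) * (p-α) = ε - (1-p) := div_mul_cancel₀ _ hpa.ne'
  obtain ⟨hd0, hd1⟩ := delta_mem hp1 hp2 ha1 ha2 hap he1 he2
  rw [privU_eq, Fin.sum_univ_three]
  have e00 : Fopt p α ε 0 0 = 1 := by simp [Fopt]
  have e01 : Fopt p α ε 0 1 = 0 := by simp [Fopt]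
  have e02 : Fopt p α ε 0 2 = 0 := by simp [Fopt]
  have e10 : Fopt p α ε 1 0 = 1 - (ε - (1-p))/(p-α) := by simp [Fopt]
  have e11 : Fopt p α ε 1 1 = (ε - (1-p))/(p-α) := by simp [Fopt]
  have e12 : Fopt p α ε 1 2 = 0 := by simp [Fopt]
  rw [e00, e01, e02, e10, e11, e12]
  have hN : (0:ℝ) ≤ ((1-p)*(1-α)+p*α - ((1-p)*α+p*(1-α)))*(p-α)
      + ((1-p)*α+p*(1-α))*(ε-1+p) := by
    nlinarith [mul_nonneg (mul_nonneg ha1 (by linarith : (0:ℝ) ≤ 1-α))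
        (by linarith : (0:ℝ) ≤ 2*p-1),
      mul_nonneg (by nlinarith : (0:ℝ) ≤ (1-p)*α+p*(1-α)) (by linarith : (0:ℝ) ≤ ε - p)]
  have m1 : ((1-p)*α + p*(1-α)) * (1 - (ε - (1-p))/(p-α)) ≤
      ((1-p)*(1-α) + p*α) * 1 := by
    have e : ((1-p)*(1-α) + p*α) * 1 - ((1-p)*α + p*(1-α)) * (1 - (ε - (1-p))/(p-α))
        = (((1-p)*(1-α)+p*α - ((1-p)*α+p*(1-α)))*(p-α)
            + ((1-p)*α+p*(1-α))*(ε-1+p)) / (p-α) := by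
      field_simp
      ring
    have := div_nonneg hN hpa.le
    linarith [e ▸ this]
  have m2 : ((1-p)*(1-α) + p*α) * 0 ≤ ((1-p)*α + p*(1-α)) * ((ε - (1-p))/(p-α)) := by
    have : (0:ℝ) ≤ ((1-p)*α+p*(1-α)) := by nlinarith
    nlinarith [mul_nonneg this hd0]
  have m3 : max (((1-p)*(1-α) + p*α) * (0:ℝ)) (((1-p)*α + p*(1-α)) * 0) = 0 := by
    norm_num
  rw [max_eq_left m1, max_eq_right m2, m3]
  have hne' : p - α ≠ 0 := hpa.ne'
  field_simp [hne']
  ring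

end opt
/-! ### Factorization of the i.i.d. quantities for memoryless filters -/

lemma pcXZn_memoryless (n : ℕ) {p α : ℝ} (hp0 : 0 ≤ p) (hp1 : p ≤ 1) (ha0 : 0 ≤ α)
    (ha1 : α ≤ 1) (W : Fin 2 → Fin 2 → ℝ) (hW : ∀ y z, 0 ≤ W y z) :
    pcXZn n p α (memoryless n W) = privP (pXY p α) W ^ n := by
  have hs : ∀ i j : Fin 2, 0 ≤ ∑ y : Fin 2, pXY p α i y * W y j := fun i j =>
    Finset.sum_nonneg fun y _ => mul_nonneg (pXY_nonneg hp0 hp1 ha0 ha1 i y) (hW y j)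
  have h1 : ∀ x z : Fin n → Fin 2,
      (∑ y : Fin n → Fin 2, pXYn n p α x y * memoryless n W y z)
        = ∏ k, ∑ j : Fin 2, pXY p α (x k) j * W j (z k) := by
    intro x z
    rw [Finset.prod_univ_sum, Fintype.piFinset_univ]
    exact Finset.sum_congr rfl fun y _ => by
      simp [pXYn, memoryless, Finset.prod_mul_distrib]
  unfold pcXZn
  calc (∑ z : Fin n → Fin 2, ⨆ x, ∑ y, pXYn n p α x y * memoryless n W y z)
      = ∑ z : Fin n → Fin 2, ∏ k, ⨆ i : Fin 2, ∑ j : Fin 2, pXY p α i j * W j (z k) := by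
        refine Finset.sum_congr rfl fun z _ => ?_
        rw [iSup_congr fun x => h1 x z]
        exact iSup_prod_eq (fun k i => ∑ j : Fin 2, pXY p α i j * W j (z k))
          (fun k i => hs i (z k))
    _ = ∏ k : Fin n, ∑ j : Fin 2, ⨆ i : Fin 2, ∑ y : Fin 2, pXY p α i y * W y j := by
        rw [Finset.prod_univ_sum, Fintype.piFinset_univ]
    _ = privP (pXY p α) W ^ n := by
        rw [Finset.prod_const, Finset.card_univ, Fintype.card_fin]
        rfl

lemma pcYZn_memoryless (n : ℕ) {p α : ℝ} (hp0 : 0 ≤ p) (hp1 : p ≤ 1) (ha0 : 0 ≤ α)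
    (ha1 : α ≤ 1) (W : Fin 2 → Fin 2 → ℝ) (hW : ∀ y z, 0 ≤ W y z) :
    pcYZn n p α (memoryless n W) = privU (pXY p α) W ^ n := by
  have hm : ∀ i j : Fin 2, 0 ≤ (∑ x : Fin 2, pXY p α x i) * W i j := fun i j =>
    mul_nonneg (Finset.sum_nonneg fun x _ => pXY_nonneg hp0 hp1 ha0 ha1 x i) (hW i j)
  have h1 : ∀ y z : Fin n → Fin 2,
      (∑ x : Fin n → Fin 2, pXYn n p α x y) * memoryless n W y z
        = ∏ k, (∑ i : Fin 2, pXY p α i (y k)) * W (y k) (z k) := by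
    intro y z
    have hmarg : (∑ x : Fin n → Fin 2, pXYn n p α x y)
        = ∏ k, ∑ i : Fin 2, pXY p α i (y k) := by
      rw [Finset.prod_univ_sum, Fintype.piFinset_univ]
      rfl
    rw [hmarg, memoryless, ← Finset.prod_mul_distrib]
  unfold pcYZn
  calc (∑ z : Fin n → Fin 2, ⨆ y, (∑ x, pXYn n p α x y) * memoryless n W y z)
      = ∑ z : Fin n → Fin 2, ∏ k, ⨆ i : Fin 2, (∑ x : Fin 2, pXY p α x i) * W i (z k) := by
        refine Finset.sum_congr rfl fun z _ => ?_
        rw [iSup_congr fun y => h1 y z]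
        exact iSup_prod_eq (fun k i => (∑ x : Fin 2, pXY p α x i) * W i (z k))
          (fun k i => hm i (z k))
    _ = ∏ k : Fin n, ∑ j : Fin 2, ⨆ i : Fin 2, (∑ x : Fin 2, pXY p α x i) * W i j := by
        rw [Finset.prod_univ_sum, Fintype.piFinset_univ]
    _ = privU (pXY p α) W ^ n := by
        rw [Finset.prod_const, Finset.card_univ, Fintype.card_fin]
        rfl
lemma rpow_pow_inv {x : ℝ} (hx : 0 ≤ x) {n : ℕ} (hn : n ≠ 0) :
    (x ^ n : ℝ) ^ ((n : ℝ)⁻¹) = x := by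
  rw [← Real.rpow_natCast x n, ← Real.rpow_mul hx,
    mul_inv_cancel₀ (Nat.cast_ne_zero.mpr hn), Real.rpow_one]

/-- For `X^n` i.i.d. `Bernoulli(p)`, `p ∈ [1/2, 1)`, `Y_k = X_k ⊕ V_k` with `V^n` i.i.d.
`Bernoulli(α)` independent of `X^n`, `α ∈ [0, 1/2)` and `ᾱ > p`: for every `n ≥ 1` and
every `ε ∈ [p, ᾱ]`, `h_n^i(ε) = 1 - ζ(ε) q` where `q = α p̄ + ᾱ p` and
`ζ(ε) = (ᾱ p̄ + ᾱ p - ε)/(ᾱ p - α p̄)`; in particular `h_n^i(ε)` does not depend on `n`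
and equals the scalar value `h(P_{XY}, ε)`. -/
theorem hIid_eq (n : ℕ) (hn : 1 ≤ n) (p α : ℝ)
    (hp : p ∈ Set.Ico (1 / 2 : ℝ) 1) (hα : α ∈ Set.Ico (0 : ℝ) (1 / 2))
    (hap : 1 - α > p) (ε : ℝ) (hε : ε ∈ Set.Icc p (1 - α)) :
    hIid n p α ε =
        1 - ((1 - α) * (1 - p) + (1 - α) * p - ε) / ((1 - α) * p - α * (1 - p))
              * (α * (1 - p) + (1 - α) * p) ∧
    hIid n p α ε = hFun (pXY p α) ε := by
  obtain ⟨hp1, hp2⟩ := hp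
  obtain ⟨hA1, hA2⟩ := hα
  obtain ⟨he1, he2⟩ := hε
  have hp0 : (0:ℝ) ≤ p := by linarith
  have hp1' : p ≤ 1 := le_of_lt hp2
  have hA1' : α ≤ 1 := by linarith
  have hpa : (0:ℝ) < p - α := by linarith
  have hε0 : (0:ℝ) < ε := by linarith
  have hne : n ≠ 0 := by omega
  have hHs0 : 0 ≤ 1 - (1-α-ε)/(p-α) * ((1-p)*α + p*(1-α)) := by
    rw [← privU_Wopt hp1 hp2 hA1 hA2 hap he1 he2]
    exact privU_nonneg hp0 hp1' hA1 hA1' _ (isStoch_Wopt hp1 hp2 hA1 hA2 hap he1 he2).1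
  have hub : ∀ u ∈ {u : ℝ | ∃ W : Fin 2 → Fin 2 → ℝ, IsStoch W ∧
      pcXZn n p α (memoryless n W) ≤ ε ^ n ∧
      u = pcYZn n p α (memoryless n W) ^ ((n : ℝ)⁻¹)},
      u ≤ 1 - (1-α-ε)/(p-α) * ((1-p)*α + p*(1-α)) := by
    rintro u ⟨W, hW, hPn, rfl⟩
    have hWnn := hW.1
    rw [pcXZn_memoryless n hp0 hp1' hA1 hA1' W hWnn] at hPn
    rw [pcYZn_memoryless n hp0 hp1' hA1 hA1' W hWnn]
    have hPnn : 0 ≤ privP (pXY p α) W := privP_nonneg hp0 hp1' hA1 hA1' W hWnn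
    have hPle : privP (pXY p α) W ≤ ε :=
      (pow_le_pow_iff_left₀ hPnn hε0.le hne).mp hPn
    have hUnn : 0 ≤ privU (pXY p α) W := privU_nonneg hp0 hp1' hA1 hA1' W hWnn
    rw [rpow_pow_inv hUnn hne]
    exact privU_le hp1 hp2 hA1 hA2 W hW hPle
  have hmem : (1 - (1-α-ε)/(p-α) * ((1-p)*α + p*(1-α))) ∈
      {u : ℝ | ∃ W : Fin 2 → Fin 2 → ℝ, IsStoch W ∧
        pcXZn n p α (memoryless n W) ≤ ε ^ n ∧
        u = pcYZn n p α (memoryless n W) ^ ((n : ℝ)⁻¹)} := by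
    refine ⟨Wopt p α ε, isStoch_Wopt hp1 hp2 hA1 hA2 hap he1 he2, ?_, ?_⟩
    · rw [pcXZn_memoryless n hp0 hp1' hA1 hA1' _
        (isStoch_Wopt hp1 hp2 hA1 hA2 hap he1 he2).1,
        privP_Wopt hp1 hp2 hA1 hA2 hap he1 he2]
    · rw [pcYZn_memoryless n hp0 hp1' hA1 hA1' _
        (isStoch_Wopt hp1 hp2 hA1 hA2 hap he1 he2).1,
        privU_Wopt hp1 hp2 hA1 hA2 hap he1 he2, rpow_pow_inv hHs0 hne]
  have hiid : hIid n p α ε = 1 - (1-α-ε)/(p-α) * ((1-p)*α + p*(1-α)) := by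
    unfold hIid
    exact le_antisymm (csSup_le ⟨_, hmem⟩ hub) (le_csSup ⟨_, hub⟩ hmem)
  have hub2 : ∀ u ∈ {u : ℝ | ∃ F ∈ filtSet 2, privP (pXY p α) F ≤ ε ∧
      privU (pXY p α) F = u}, u ≤ 1 - (1-α-ε)/(p-α) * ((1-p)*α + p*(1-α)) := by
    rintro u ⟨F, hF, hPle, rfl⟩
    exact privU_le hp1 hp2 hA1 hA2 F hF hPle
  have hmem2 : (1 - (1-α-ε)/(p-α) * ((1-p)*α + p*(1-α))) ∈
      {u : ℝ | ∃ F ∈ filtSet 2, privP (pXY p α) F ≤ ε ∧ privU (pXY p α) F = u} :=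
    ⟨Fopt p α ε, isStoch_Fopt hp1 hp2 hA1 hA2 hap he1 he2,
      le_of_eq (privP_Fopt hp1 hp2 hA1 hA2 hap he1 he2),
      privU_Fopt hp1 hp2 hA1 hA2 hap he1 he2⟩
  have hfun : hFun (pXY p α) ε = 1 - (1-α-ε)/(p-α) * ((1-p)*α + p*(1-α)) := by
    unfold hFun
    exact le_antisymm (csSup_le ⟨_, hmem2⟩ hub2) (le_csSup ⟨_, hub2⟩ hmem2)
  have hRHS : 1 - ((1 - α) * (1 - p) + (1 - α) * p - ε) / ((1 - α) * p - α * (1 - p))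
        * (α * (1 - p) + (1 - α) * p)
      = 1 - (1-α-ε)/(p-α) * ((1-p)*α + p*(1-α)) := by
    rw [show (1 - α) * (1 - p) + (1 - α) * p - ε = 1-α-ε from by ring,
      show (1 - α) * p - α * (1 - p) = p - α from by ring,
      show α * (1 - p) + (1 - α) * p = (1-p)*α + p*(1-α) from by ring]
  exact ⟨by rw [hiid, hRHS], by rw [hiid, hfun]⟩
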